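/- Let p > 2, β > 0 and ω > 0. Then there exists a unique pair (t_−, t_+) with 0 < t_− < t_+ < 1 solving the system t_+(1−t_+²)^{1/(p−2)} = t_−(1−t_−²)^{1/(p−2)} and 1/t_+ − 1/t_− = −β√ω; moreover this solution satisfies 0 < t_− < √((p−2)/p) < t_+ < 1. -/

import Mathlib

/-!
With `q = 1/(p-2)`, the profile `F t = t (1-t²)^q` increases on `[0, s]` and decreases on `[s, 1]`,
where `s = √(1/(1+2q)) = √((p-2)/p)` is the zero of `F'`; so `F t₋ = F t₊` with `t₋ < t₊` forces
`t₋ < s < t₊`. The second equation says `t₋ = t₊/(1 + c t₊)` with `c = β√ω`, so solutions are the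
zeros of `H t = F t - F (t/(1+ct))` on `(s, 1)`. Since `H s > 0` and `H 1 = -F (1/(1+c)) < 0`, a zero
exists; it is unique because `H` is strictly decreasing there: `F` decreases at `t` and increases
at the monotone argument `t/(1+ct) < s`.
-/

open Set

noncomputable def profile (q t : ℝ) : ℝ := t * (1 - t ^ 2) ^ q

noncomputable def profilePeak (q : ℝ) : ℝ := √(1 / (1 + 2 * q))

section Unimodal

variable {f : ℝ → ℝ} {a s b : ℝ}

theorem lt_and_lt_of_apply_eq_of_unimodal (hmono : StrictMonoOn f (Icc a s))
    (hanti : StrictAntiOn f (Icc s b)) {x y : ℝ} (hx : a ≤ x) (hy : y ≤ b) (hxy : x < y)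
    (hf : f x = f y) : x < s ∧ s < y := by
  constructor
  · by_contra! hsx
    exact (hanti ⟨hsx, by linarith⟩ ⟨by linarith, hy⟩ hxy).ne' hf
  · by_contra! hys
    exact (hmono ⟨hx, by linarith⟩ ⟨by linarith, hys⟩ hxy).ne hf

theorem strictAntiOn_sub_apply_comp {φ : ℝ → ℝ} (hmono : MonotoneOn f (Icc a s))
    (hanti : StrictAntiOn f (Icc s b)) (hφ : MonotoneOn φ (Icc s b)) :
    StrictAntiOn (fun y => f y - f (φ y)) (Icc s b ∩ φ ⁻¹' Icc a s) := by
  intro x hx y hy hxy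
  have hfy := hanti hx.1 hy.1 hxy
  have hfφ := hmono hx.2 hy.2 (hφ hx.1 hy.1 hxy.le)
  dsimp only
  linarith

end Unimodal

section Profile

variable {q : ℝ}

theorem continuous_profile (hq : 0 ≤ q) : Continuous (profile q) :=
  continuous_id.mul ((continuous_const.sub (continuous_pow 2)).rpow_const fun _ => Or.inr hq)

theorem profile_pos {t : ℝ} (h0 : 0 < t) (h1 : t < 1) : 0 < profile q t :=
  mul_pos h0 (Real.rpow_pos_of_pos (by nlinarith) q)

theorem profile_one (hq : q ≠ 0) : profile q 1 = 0 := by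
  simp [profile, Real.zero_rpow hq]

theorem hasDerivAt_profile {t : ℝ} (ht : t ^ 2 < 1) :
    HasDerivAt (profile q) ((1 - t ^ 2) ^ (q - 1) * (1 - (1 + 2 * q) * t ^ 2)) t := by
  have hbase : 0 < 1 - t ^ 2 := by linarith
  have hpow : HasDerivAt (fun t : ℝ => (1 - t ^ 2) ^ q)
      (-(2 * t) * q * (1 - t ^ 2) ^ (q - 1)) t := by
    have := ((hasDerivAt_pow 2 t).const_sub 1).rpow_const (p := q) (Or.inl hbase.ne')
    simpa using this
  have hsplit : (1 - t ^ 2) ^ q = (1 - t ^ 2) ^ (q - 1) * (1 - t ^ 2) := by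
    rw [← Real.rpow_add_one hbase.ne', sub_add_cancel]
  exact ((hasDerivAt_id' t).mul hpow).congr_deriv (by rw [hsplit]; ring)

theorem lt_profilePeak_iff (hq : 0 ≤ q) {t : ℝ} (ht : 0 ≤ t) :
    t < profilePeak q ↔ (1 + 2 * q) * t ^ 2 < 1 := by
  rw [profilePeak, Real.lt_sqrt ht, lt_div_iff₀' (by linarith)]

theorem profilePeak_lt_iff (hq : 0 ≤ q) {t : ℝ} (ht : 0 ≤ t) :
    profilePeak q < t ↔ 1 < (1 + 2 * q) * t ^ 2 := by
  rw [profilePeak, Real.sqrt_lt (by positivity) ht, div_lt_iff₀' (by linarith)]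

theorem profilePeak_pos (hq : 0 ≤ q) : 0 < profilePeak q :=
  Real.sqrt_pos.2 (by positivity)

theorem strictMonoOn_profile (hq : 0 ≤ q) : StrictMonoOn (profile q) (Icc 0 (profilePeak q)) := by
  refine strictMonoOn_of_deriv_pos (convex_Icc _ _) (continuous_profile hq).continuousOn ?_
  rw [interior_Icc]
  rintro t ⟨ht0, htpeak⟩
  have hpeak := (lt_profilePeak_iff hq ht0.le).1 htpeak
  rw [(hasDerivAt_profile (by nlinarith)).deriv]
  exact mul_pos (Real.rpow_pos_of_pos (by nlinarith) _) (by linarith)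

theorem strictAntiOn_profile (hq : 0 ≤ q) : StrictAntiOn (profile q) (Icc (profilePeak q) 1) := by
  refine strictAntiOn_of_deriv_neg (convex_Icc _ _) (continuous_profile hq).continuousOn ?_
  rw [interior_Icc]
  rintro t ⟨hpeakt, ht1⟩
  have ht0 : 0 < t := (profilePeak_pos hq).trans hpeakt
  have hpeak := (profilePeak_lt_iff hq ht0.le).1 hpeakt
  rw [(hasDerivAt_profile (by nlinarith)).deriv]
  exact mul_neg_of_pos_of_neg (Real.rpow_pos_of_pos (by nlinarith) _) (by linarith)

theorem profilePeak_lt_one (hq : 0 < q) : profilePeak q < 1 := by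
  rw [profilePeak_lt_iff hq.le zero_le_one]
  linarith

end Profile

section Reciprocal

variable {c : ℝ}

theorem div_one_add_mul_pos (hc : 0 ≤ c) {t : ℝ} (ht : 0 < t) : 0 < t / (1 + c * t) := by
  positivity

theorem div_one_add_mul_lt (hc : 0 < c) {t : ℝ} (ht : 0 < t) : t / (1 + c * t) < t := by
  rw [div_lt_iff₀ (by positivity)]
  nlinarith [mul_pos hc (mul_pos ht ht)]

theorem strictMonoOn_div_one_add_mul (hc : 0 ≤ c) :
    StrictMonoOn (fun t => t / (1 + c * t)) (Ici 0) := by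
  intro x hx y hy hxy
  dsimp only
  rw [div_lt_div_iff₀ (by nlinarith [mem_Ici.1 hx]) (by nlinarith [mem_Ici.1 hy])]
  linarith

theorem one_div_sub_one_div_eq_neg_iff (hc : 0 ≤ c) {x y : ℝ} (hx : 0 < x) (hy : 0 < y) :
    1 / y - 1 / x = -c ↔ x = y / (1 + c * y) := by
  rw [eq_div_iff (by positivity)]
  field_simp
  constructor <;> intro h <;> linarith

end Reciprocal

theorem exists_profile_eq_profile_div {q c : ℝ} (hq : 0 < q) (hc : 0 < c) :
    ∃ t ∈ Ioo (profilePeak q) 1, profile q t = profile q (t / (1 + c * t)) := by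
  set H : ℝ → ℝ := fun t => profile q t - profile q (t / (1 + c * t))
  have hpeak0 := profilePeak_pos hq.le
  have hpeak1 := profilePeak_lt_one hq
  have hH : ContinuousOn H (Icc (profilePeak q) 1) := by
    refine (continuous_profile hq.le).continuousOn.sub
      ((continuous_profile hq.le).comp_continuousOn (continuousOn_id.div (by fun_prop) ?_))
    intro t ht
    nlinarith [ht.1]
  have hH_peak : 0 < H (profilePeak q) :=
    sub_pos.2 <| strictMonoOn_profile hq.le ⟨(div_one_add_mul_pos hc.le hpeak0).le,
      (div_one_add_mul_lt hc hpeak0).le⟩ ⟨hpeak0.le, le_rfl⟩ (div_one_add_mul_lt hc hpeak0)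
  have hH_one : H 1 < 0 := by
    simp only [H, profile_one hq.ne', zero_sub, neg_neg_iff_pos]
    exact profile_pos (div_one_add_mul_pos hc.le one_pos) (div_one_add_mul_lt hc one_pos)
  obtain ⟨t, ht, hHt⟩ := intermediate_value_Ioo' hpeak1.le hH ⟨hH_one, hH_peak⟩
  exact ⟨t, ht, sub_eq_zero.1 hHt⟩

structure IsTransmissionSolution (q c tm tp : ℝ) : Prop where
  pos : 0 < tm
  lt : tm < tp
  lt_one : tp < 1
  profile_eq : profile q tp = profile q tm
  one_div_sub_one_div : 1 / tp - 1 / tm = -c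

namespace IsTransmissionSolution

variable {q c tm tp : ℝ}

theorem eq_div (hc : 0 ≤ c) (h : IsTransmissionSolution q c tm tp) : tm = tp / (1 + c * tp) :=
  (one_div_sub_one_div_eq_neg_iff hc h.pos (h.pos.trans h.lt)).1 h.one_div_sub_one_div

theorem lt_profilePeak_lt (hq : 0 ≤ q) (h : IsTransmissionSolution q c tm tp) :
    tm < profilePeak q ∧ profilePeak q < tp :=
  lt_and_lt_of_apply_eq_of_unimodal (strictMonoOn_profile hq) (strictAntiOn_profile hq)
    h.pos.le h.lt_one.le h.lt h.profile_eq.symm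

theorem of_profile_eq (hc : 0 < c) (htp0 : 0 < tp) (htp1 : tp < 1)
    (hF : profile q tp = profile q (tp / (1 + c * tp))) :
    IsTransmissionSolution q c (tp / (1 + c * tp)) tp :=
  ⟨div_one_add_mul_pos hc.le htp0, div_one_add_mul_lt hc htp0, htp1, hF,
    (one_div_sub_one_div_eq_neg_iff hc.le (div_one_add_mul_pos hc.le htp0) htp0).2 rfl⟩

theorem unique (hq : 0 ≤ q) (hc : 0 ≤ c) {sm sp : ℝ} (h : IsTransmissionSolution q c tm tp)
    (h' : IsTransmissionSolution q c sm sp) : sm = tm ∧ sp = tp := by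
  obtain ⟨htm, hpeak_tp⟩ := h.lt_profilePeak_lt hq
  obtain ⟨hsm, hpeak_sp⟩ := h'.lt_profilePeak_lt hq
  have hF := h.profile_eq
  have hF' := h'.profile_eq
  obtain rfl := h.eq_div hc
  obtain rfl := h'.eq_div hc
  have hsub := strictAntiOn_sub_apply_comp (strictMonoOn_profile hq).monotoneOn
    (strictAntiOn_profile hq) ((strictMonoOn_div_one_add_mul hc).monotoneOn.mono
      fun t ht => (profilePeak_pos hq).le.trans ht.1)
  obtain rfl : sp = tp := hsub.injOn ⟨⟨hpeak_sp.le, h'.lt_one.le⟩, h'.pos.le, hsm.le⟩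
    ⟨⟨hpeak_tp.le, h.lt_one.le⟩, h.pos.le, htm.le⟩ (by rw [← hF, ← hF', sub_self, sub_self])
  exact ⟨rfl, rfl⟩

end IsTransmissionSolution

theorem exists_isTransmissionSolution {q c : ℝ} (hq : 0 < q) (hc : 0 < c) :
    ∃ tm tp, IsTransmissionSolution q c tm tp := by
  obtain ⟨tp, ⟨hpeak_tp, htp1⟩, hF⟩ := exists_profile_eq_profile_div hq hc
  exact ⟨_, tp, .of_profile_eq hc ((profilePeak_pos hq.le).trans hpeak_tp) htp1 hF⟩

theorem transmission_system_unique_solution (p β ω : ℝ) (hp : 2 < p) (hβ : 0 < β)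
    (hω : 0 < ω) :
    ∃ tm tp : ℝ,
      (0 < tm ∧ tm < tp ∧ tp < 1 ∧
        tp * (1 - tp ^ 2) ^ (1 / (p - 2)) = tm * (1 - tm ^ 2) ^ (1 / (p - 2)) ∧
        1 / tp - 1 / tm = -β * Real.sqrt ω) ∧
      tm < Real.sqrt ((p - 2) / p) ∧ Real.sqrt ((p - 2) / p) < tp ∧
      ∀ sm sp : ℝ, 0 < sm → sm < sp → sp < 1 →
        sp * (1 - sp ^ 2) ^ (1 / (p - 2)) = sm * (1 - sm ^ 2) ^ (1 / (p - 2)) →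
        1 / sp - 1 / sm = -β * Real.sqrt ω → sm = tm ∧ sp = tp := by
  have hpeak : Real.sqrt ((p - 2) / p) = profilePeak (1 / (p - 2)) := by
    have : p - 2 ≠ 0 := by linarith
    rw [profilePeak]
    congr 1
    rw [div_eq_div_iff (by linarith) (by positivity)]
    field_simp
    ring
  have hq : 0 < 1 / (p - 2) := one_div_pos.2 (sub_pos.2 hp)
  have hc : 0 < β * Real.sqrt ω := mul_pos hβ (Real.sqrt_pos.2 hω)
  rw [hpeak, neg_mul]
  obtain ⟨tm, tp, h⟩ := exists_isTransmissionSolution hq hc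
  obtain ⟨htm, htp⟩ := h.lt_profilePeak_lt hq.le
  exact ⟨tm, tp, ⟨h.pos, h.lt, h.lt_one, h.profile_eq, h.one_div_sub_one_div⟩, htm, htp,
    fun sm sp h0 hlt h1 hF hrec => h.unique hq.le hc.le ⟨h0, hlt, h1, hF, hrec⟩⟩
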